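/- For π ∈ (0,1)^n, the points x = π and x = 1−π (coordinatewise complement) are zeros of the mean-field vector field f, i.e., f(π) = 0 and f(1−π) = 0, where f_i(x) = ∑_{r∈{±1}^n} g_π(r)[(1/2)(1 − tanh(⟨r,ℓ_x⟩/2) r_i) − x_i]. -/

import Mathlib

open Real Finset

/-- Sign of a Boolean: `true ↦ +1`, `false ↦ -1`. -/
def sg (b : Bool) : ℝ := if b then 1 else -1

/-- Output distribution (cosh form). -/
noncomputable def gc {n : ℕ} (x : Fin n → ℝ) (r : Fin n → ℝ) : ℝ :=
  Real.cosh ((∑ j, r j * Real.log ((1 - x j) / x j)) / 2) *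
    ∏ j, Real.sqrt (x j * (1 - x j))

/-- Update field coordinate (tanh form). -/
noncomputable def ft {n : ℕ} (r x : Fin n → ℝ) (i : Fin n) : ℝ :=
  (1/2) * (1 - Real.tanh ((∑ j, r j * Real.log ((1 - x j) / x j)) / 2) * r i) - x i

/-- KL divergence from `g_p` to `g_x` (sum over the hypercube `{±1}^n`). -/
noncomputable def V {n : ℕ} (p x : Fin n → ℝ) : ℝ :=
  ∑ r : Fin n → Bool, gc p (fun k => sg (r k)) *
    Real.log (gc p (fun k => sg (r k)) / gc x (fun k => sg (r k)))

/-- Mean-field vector field `f_i(x) = E_{R ∼ g_p}[f̃_i(R,x)]`. -/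
noncomputable def fvec {n : ℕ} (p x : Fin n → ℝ) (i : Fin n) : ℝ :=
  ∑ r : Fin n → Bool, gc p (fun k => sg (r k)) * ft (fun k => sg (r k)) x i

/-!
Put `W(r) = ∏ⱼ (r_j = +1 ? 1 - π_j : π_j)`, the law of independent signs with `E[r_i] = 1 - 2π_i`.
Since `exp(±⟨r,ℓ_π⟩/2) ∏ⱼ √(π_j(1-π_j))` equals `W(±r)`, we get `g_π(r) = (W(r) + W(-r))/2` and
`g_π(r) tanh(⟨r,ℓ_π⟩/2) = (W(r) - W(-r))/2`. Pairing `r` with `-r`, `f_i(π)` becomes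
`(1/2 - π_i) - E_W[r_i]/2 = 0`. Finally `ℓ_{1-x} = -ℓ_x` and `tanh` is odd, so `f(1-x) = -f(x)`.
-/

lemma sg_not (b : Bool) : sg (!b) = -sg b := by
  cases b <;> simp [sg]

lemma exp_half_log_div_mul_sqrt {a c : ℝ} (ha : 0 < a) (hc : 0 < c) :
    exp (log (a / c) / 2) * √(c * a) = a := by
  rw [← Real.log_sqrt (by positivity), Real.exp_log (by positivity), ← Real.sqrt_mul (by positivity),
    show a / c * (c * a) = a ^ 2 by field_simp, Real.sqrt_sq ha.le]

section SignCube

variable {ι : Type*} [Fintype ι]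

noncomputable def signWeight (p : ι → ℝ) (r : ι → Bool) : ℝ :=
  ∏ j, if r j then 1 - p j else p j

noncomputable def halfLogOdds (x : ι → ℝ) (r : ι → Bool) : ℝ :=
  (∑ j, sg (r j) * log ((1 - x j) / x j)) / 2

lemma halfLogOdds_not (x : ι → ℝ) (r : ι → Bool) :
    halfLogOdds x (fun k => !r k) = -halfLogOdds x r := by
  simp only [halfLogOdds, sg_not, neg_mul, Finset.sum_neg_distrib, neg_div]

lemma exp_halfLogOdds_mul_prod_sqrt {p : ι → ℝ} (hp : ∀ i, p i ∈ Set.Ioo (0 : ℝ) 1)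
    (r : ι → Bool) :
    exp (halfLogOdds p r) * ∏ j, √(p j * (1 - p j)) = signWeight p r := by
  rw [halfLogOdds, Finset.sum_div, Real.exp_sum, ← Finset.prod_mul_distrib]
  refine Finset.prod_congr rfl fun j _ => ?_
  obtain ⟨hp0, hp1⟩ := hp j
  have hq : 0 < 1 - p j := sub_pos.mpr hp1
  cases r j
  · simp only [sg, Bool.false_eq_true, if_false, neg_one_mul, ← Real.log_inv, inv_div,
      mul_comm (p j)]
    exact exp_half_log_div_mul_sqrt hp0 hq
  · simp only [sg, if_true, one_mul]
    exact exp_half_log_div_mul_sqrt hq hp0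

variable [DecidableEq ι]

lemma sum_add_comp_not (h : (ι → Bool) → ℝ) :
    ∑ r, (h r + h (fun k => !r k)) = 2 * ∑ r, h r := by
  have hinv : Function.Involutive fun (r : ι → Bool) k => !r k := fun r => by simp
  rw [Finset.sum_add_distrib,
    Fintype.sum_equiv (hinv.toPerm _) (fun r => h fun k => !r k) h fun _ => rfl]
  ring

lemma sum_signWeight (p : ι → ℝ) : ∑ r, signWeight p r = 1 := by
  unfold signWeight
  rw [← Fintype.prod_sum fun j (b : Bool) => if b then 1 - p j else p j]
  simp

lemma sum_sg_mul_signWeight (p : ι → ℝ) (i : ι) :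
    ∑ r, sg (r i) * signWeight p r = 1 - 2 * p i := by
  have factor : ∀ r : ι → Bool, sg (r i) * signWeight p r =
      ∏ j, (if j = i then sg (r j) else 1) * (if r j then 1 - p j else p j) := fun r => by
    rw [Finset.prod_mul_distrib, Finset.prod_ite_eq', if_pos (Finset.mem_univ i), signWeight]
  calc ∑ r, sg (r i) * signWeight p r
      = ∏ j, ∑ b : Bool, (if j = i then sg b else 1) * (if b then 1 - p j else p j) := by
        rw [Fintype.prod_sum]
        exact Finset.sum_congr rfl fun r _ => factor r
    _ = ∏ j, if j = i then 1 - 2 * p j else 1 := by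
        refine Finset.prod_congr rfl fun j _ => ?_
        split_ifs
        · simp only [Fintype.sum_bool, sg, if_true, Bool.false_eq_true, if_false]
          ring
        · simp
    _ = 1 - 2 * p i := by simp

end SignCube

section Field

variable {n : ℕ} {p : Fin n → ℝ}

lemma gc_sg_eq (hp : ∀ i, p i ∈ Set.Ioo (0 : ℝ) 1) (r : Fin n → Bool) :
    gc p (fun k => sg (r k)) = (signWeight p r + signWeight p (fun k => !r k)) / 2 := by
  rw [← exp_halfLogOdds_mul_prod_sqrt hp, ← exp_halfLogOdds_mul_prod_sqrt hp, halfLogOdds_not,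
    gc, ← halfLogOdds, Real.cosh_eq]
  ring

lemma gc_sg_mul_tanh (hp : ∀ i, p i ∈ Set.Ioo (0 : ℝ) 1) (r : Fin n → Bool) :
    gc p (fun k => sg (r k)) * tanh (halfLogOdds p r) =
      (signWeight p r - signWeight p (fun k => !r k)) / 2 := by
  rw [← exp_halfLogOdds_mul_prod_sqrt hp, ← exp_halfLogOdds_mul_prod_sqrt hp, halfLogOdds_not,
    gc, ← halfLogOdds, Real.tanh_eq_sinh_div_cosh, Real.sinh_eq]
  field_simp

lemma gc_sg_mul_ft_self (hp : ∀ i, p i ∈ Set.Ioo (0 : ℝ) 1) (r : Fin n → Bool) (i : Fin n) :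
    gc p (fun k => sg (r k)) * ft (fun k => sg (r k)) p i =
      (1 - 2 * p i - sg (r i)) * signWeight p r / 4 +
        (1 - 2 * p i - sg (!r i)) * signWeight p (fun k => !r k) / 4 := by
  have hft : ft (fun k => sg (r k)) p i = 1 / 2 * (1 - tanh (halfLogOdds p r) * sg (r i)) - p i :=
    rfl
  rw [hft, sg_not]
  linear_combination (1 / 2 - p i) * gc_sg_eq hp r - sg (r i) / 2 * gc_sg_mul_tanh hp r

lemma fvec_self (hp : ∀ i, p i ∈ Set.Ioo (0 : ℝ) 1) (i : Fin n) : fvec p p i = 0 := by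
  calc fvec p p i
      = 2 * ∑ r, (1 - 2 * p i - sg (r i)) * signWeight p r / 4 := by
        rw [fvec, ← sum_add_comp_not]
        exact Finset.sum_congr rfl fun r _ => gc_sg_mul_ft_self hp r i
    _ = ((1 - 2 * p i) * ∑ r, signWeight p r - ∑ r, sg (r i) * signWeight p r) / 2 := by
        rw [Finset.mul_sum, Finset.mul_sum, ← Finset.sum_sub_distrib, Finset.sum_div]
        exact Finset.sum_congr rfl fun r _ => by ring
    _ = 0 := by
        rw [sum_signWeight, sum_sg_mul_signWeight]
        ring

end Field

lemma ft_one_sub {n : ℕ} (r x : Fin n → ℝ) (i : Fin n) :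
    ft r (fun k => 1 - x k) i = -ft r x i := by
  have hlog : ∀ j, log ((1 - (1 - x j)) / (1 - x j)) = -log ((1 - x j) / x j) := fun j => by
    rw [sub_sub_cancel, ← Real.log_inv, inv_div]
  simp only [ft, hlog, mul_neg, Finset.sum_neg_distrib, neg_div, Real.tanh_neg]
  ring

lemma fvec_one_sub {n : ℕ} (p x : Fin n → ℝ) (i : Fin n) :
    fvec p (fun k => 1 - x k) i = -fvec p x i := by
  simp only [fvec, ft_one_sub, mul_neg, Finset.sum_neg_distrib]

theorem stmt13 (n : ℕ) (p : Fin n → ℝ) (hp : ∀ i, p i ∈ Set.Ioo (0:ℝ) 1) :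
    (∀ i, fvec p p i = 0) ∧ (∀ i, fvec p (fun k => 1 - p k) i = 0) :=
  ⟨fvec_self hp, fun i => by rw [fvec_one_sub, fvec_self hp, neg_zero]⟩
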